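/- arXiv:2503.08615 — 7 statements merged into one kernel-verified Lean document; each statement's English description precedes it below -/
import Mathlib

section
/- Let H be a monoid. An element X of 𝒫fin,1(H) is irreducible in 𝒫fin,1(H) if and only if X ≠ {1_H} and X ≠ Y·Z for all Y, Z ∈ 𝒫fin,1(H) with Y ⊊ X and Z ⊊ X. -/
open scoped Pointwise

section Defs

variable {M : Type*} [Monoid M]

/-- `x` divides `y` (two-sidedly) in a monoid: `y = u * x * v` for some `u v`. -/
def dvdTS (x y : M) : Prop := ∃ u v : M, y = u * x * v

/-- A non-unit-divisor: an element that does not divide `1`. -/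
def isNonUnitDivisor (x : M) : Prop := ¬ dvdTS x 1

/-- `x` properly divides `y`: `x` divides `y` but `y` does not divide `x`. -/
def properDvdTS (x y : M) : Prop := dvdTS x y ∧ ¬ dvdTS y x

/-- An irreducible: a non-unit-divisor `a` with `a ≠ x * y` whenever `x, y` are
non-unit-divisors properly dividing `a`. -/
def isIrred (a : M) : Prop :=
  isNonUnitDivisor a ∧
    ∀ x y : M, isNonUnitDivisor x → isNonUnitDivisor y →
      properDvdTS x a → properDvdTS y a → a ≠ x * y

/-- An atom: a non-unit-divisor that is not a product of two non-unit-divisors. -/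
def isAtomTS (a : M) : Prop :=
  isNonUnitDivisor a ∧ ∀ x y : M, isNonUnitDivisor x → isNonUnitDivisor y → a ≠ x * y

/-- A quark: a non-unit-divisor not properly divided by any non-unit-divisor. -/
def isQuarkTS (a : M) : Prop :=
  isNonUnitDivisor a ∧ ∀ x : M, isNonUnitDivisor x → ¬ properDvdTS x a

/-- A factorization of `x` into irreducibles, recorded as a list. -/
def IsFactorization (l : List M) (x : M) : Prop :=
  (∀ a ∈ l, isIrred a) ∧ l.prod = x

/-- A minimal factorization: a factorization of `x` such that no product, in any order,
of a proper sub-multiset of its factors equals `x`. -/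
def IsMinimalFactorization (l : List M) (x : M) : Prop :=
  IsFactorization l x ∧
    ∀ l' : List M, (↑l' : Multiset M) < (↑l : Multiset M) → l'.prod ≠ x

end Defs

/-- A unique minimal factorization (UmF) monoid: every non-identity element has a minimal
factorization into irreducibles, unique up to permutation of the factors. -/
def IsUmF (M : Type*) [Monoid M] : Prop :=
  (∀ x : M, x ≠ 1 → ∃ l : List M, IsMinimalFactorization l x) ∧
    ∀ x : M, ∀ l l' : List M,
      IsMinimalFactorization l x → IsMinimalFactorization l' x → l.Perm l'

/-- The reduced finitary power monoid `𝒫fin,1(H)` of a monoid `H`: the submonoid of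
`Finset H` (under pointwise multiplication) of finite subsets containing `1`. -/
def redPow (H : Type*) [Monoid H] [DecidableEq H] : Submonoid (Finset H) where
  carrier := {X : Finset H | (1 : H) ∈ X}
  one_mem' := by simp
  mul_mem' := by
    intro X Y hX hY
    simpa using Finset.mul_mem_mul hX hY

section Aux

variable {H : Type*} [Monoid H] [DecidableEq H]

lemma redPow_one_mem (X : redPow H) : (1 : H) ∈ (X : Finset H) := X.2

lemma redPow_subset_mul_left (Y Z : redPow H) :
    (Y : Finset H) ⊆ ((Y * Z : redPow H) : Finset H) := by
  intro a ha
  have : a * 1 ∈ (Y : Finset H) * (Z : Finset H) :=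
    Finset.mul_mem_mul ha (redPow_one_mem Z)
  simpa using this

lemma redPow_subset_mul_right (Y Z : redPow H) :
    (Z : Finset H) ⊆ ((Y * Z : redPow H) : Finset H) := by
  intro a ha
  have : (1 : H) * a ∈ (Y : Finset H) * (Z : Finset H) :=
    Finset.mul_mem_mul (redPow_one_mem Y) ha
  simpa using this

lemma redPow_dvd_subset {Y X : redPow H} (h : dvdTS Y X) :
    (Y : Finset H) ⊆ (X : Finset H) := by
  obtain ⟨u, v, rfl⟩ := h
  intro a ha
  rw [mul_assoc]
  exact redPow_subset_mul_right u _ (redPow_subset_mul_left Y v ha)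

lemma redPow_nonUnitDivisor_iff (X : redPow H) : isNonUnitDivisor X ↔ X ≠ 1 := by
  constructor
  · rintro h rfl
    exact h ⟨1, 1, by simp⟩
  · intro hX hd
    have hsub : (X : Finset H) ⊆ ((1 : redPow H) : Finset H) := by
      have := redPow_dvd_subset hd
      simpa using this
    apply hX
    apply Subtype.ext
    apply Finset.Subset.antisymm hsub
    intro a ha
    have : a = 1 := by
      have : a ∈ ((1 : redPow H) : Finset H) := by
        simpa using ha
      simpa [Submonoid.coe_one, Finset.mem_one] using this
    subst this
    exact redPow_one_mem X

end Aux

theorem stmt_2 {H : Type*} [Monoid H] [DecidableEq H] (X : redPow H) :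
    isIrred X ↔ X ≠ 1 ∧ ∀ Y Z : redPow H,
      (Y : Finset H) ⊂ (X : Finset H) → (Z : Finset H) ⊂ (X : Finset H) → X ≠ Y * Z := by
  constructor
  · rintro ⟨hnu, hirr⟩
    refine ⟨(redPow_nonUnitDivisor_iff X).1 hnu, ?_⟩
    rintro Y Z hY hZ rfl
    have hYne : Y ≠ 1 := by
      rintro rfl
      simp at hZ
    have hZne : Z ≠ 1 := by
      rintro rfl
      simp at hY
    refine hirr Y Z ((redPow_nonUnitDivisor_iff Y).2 hYne)
      ((redPow_nonUnitDivisor_iff Z).2 hZne) ⟨⟨1, Z, by simp⟩, ?_⟩ ⟨⟨Y, 1, by simp⟩, ?_⟩ rfl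
    · intro hd
      exact hY.2 (redPow_dvd_subset hd)
    · intro hd
      exact hZ.2 (redPow_dvd_subset hd)
  · rintro ⟨hne, h⟩
    refine ⟨(redPow_nonUnitDivisor_iff X).2 hne, ?_⟩
    rintro Y Z hYnu hZnu hYp hZp rfl
    refine h Y Z ⟨redPow_subset_mul_left Y Z, ?_⟩ ⟨redPow_subset_mul_right Y Z, ?_⟩ rfl
    · intro hsub
      apply hYp.2
      have : (Y : Finset H) = ((Y * Z : redPow H) : Finset H) :=
        Finset.Subset.antisymm (redPow_subset_mul_left Y Z) hsub
      exact ⟨1, 1, by simpa using (Subtype.ext this)⟩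
    · intro hsub
      apply hZp.2
      have : (Z : Finset H) = ((Y * Z : redPow H) : Finset H) :=
        Finset.Subset.antisymm (redPow_subset_mul_right Y Z) hsub
      exact ⟨1, 1, by simpa using (Subtype.ext this)⟩
end

section
/- Let H be a monoid. An element X of 𝒫fin,1(H) is irreducible in 𝒫fin,1(H) if and only if X is a quark of 𝒫fin,1(H). -/
open scoped Pointwise

section Aux
variable {H : Type*} [Monoid H] [DecidableEq H]

lemma rp_one_mem (X : redPow H) : (1:H) ∈ (X : Finset H) := X.2

lemma rp_coe_mul (X Y : redPow H) : ((X*Y : redPow H) : Finset H) = (X : Finset H) * (Y : Finset H) := rfl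

lemma rp_coe_one : ((1 : redPow H) : Finset H) = {1} := rfl

lemma rp_subset_mul_left (X Y : redPow H) : (X : Finset H) ⊆ ((X*Y : redPow H) : Finset H) := by
  intro a ha
  rw [rp_coe_mul]
  simpa using Finset.mul_mem_mul ha (rp_one_mem Y)

lemma rp_subset_mul_right (X Y : redPow H) : (Y : Finset H) ⊆ ((X*Y : redPow H) : Finset H) := by
  intro a ha
  rw [rp_coe_mul]
  simpa using Finset.mul_mem_mul (rp_one_mem X) ha

end Aux

section Aux2
variable {H : Type*} [Monoid H] [DecidableEq H]

lemma rp_dvd_subset {A B : redPow H} (h : dvdTS A B) : (A : Finset H) ⊆ (B : Finset H) := by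
  obtain ⟨u, v, rfl⟩ := h
  exact (rp_subset_mul_right u A).trans (rp_subset_mul_left (u*A) v)

lemma rp_nonunit_iff {X : redPow H} : isNonUnitDivisor X ↔ X ≠ 1 := by
  constructor
  · intro h h1
    exact h ⟨1, 1, by rw [h1, one_mul, mul_one]⟩
  · intro h hd
    apply h
    apply Subtype.ext
    apply Finset.Subset.antisymm
    · have := rp_dvd_subset hd
      rwa [rp_coe_one] at this
    · rw [rp_coe_one]
      simpa using rp_one_mem X

lemma rp_exists_ne_one {X : redPow H} (h : X ≠ 1) : ∃ w ∈ (X : Finset H), w ≠ 1 := by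
  by_contra hc
  push_neg at hc
  apply h
  apply Subtype.ext
  rw [rp_coe_one]
  apply Finset.Subset.antisymm
  · intro a ha; simpa using hc a ha
  · simpa using rp_one_mem X

lemma rp_notIrred_of_split {X A B : redPow H} (h : X = A * B) (hA1 : A ≠ 1) (hB1 : B ≠ 1)
    (hAX : A ≠ X) (hBX : B ≠ X) : ¬ isIrred X := by
  intro hirr
  have hAd : dvdTS A X := ⟨1, B, by rw [h, one_mul]⟩
  have hBd : dvdTS B X := ⟨A, 1, by rw [h, mul_one]⟩
  have hpA : properDvdTS A X := ⟨hAd, fun hd => hAX (Subtype.ext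
    (Finset.Subset.antisymm (rp_dvd_subset hAd) (rp_dvd_subset hd)))⟩
  have hpB : properDvdTS B X := ⟨hBd, fun hd => hBX (Subtype.ext
    (Finset.Subset.antisymm (rp_dvd_subset hBd) (rp_dvd_subset hd)))⟩
  exact hirr.2 A B (rp_nonunit_iff.mpr hA1) (rp_nonunit_iff.mpr hB1) hpA hpB h

lemma rp_ne_pair {X Y : redPow H} (hsub : (Y : Finset H) ⊆ (X : Finset H)) (hY1 : Y ≠ 1)
    (hYX : Y ≠ X) (w : H) : (X : Finset H) ≠ {1, w} := by
  intro h
  apply hYX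
  apply Subtype.ext
  apply Finset.Subset.antisymm hsub
  obtain ⟨y, hy, hy1⟩ := rp_exists_ne_one hY1
  have hyX : y ∈ (X : Finset H) := hsub hy
  rw [h] at hyX
  have hyw : y = w := by
    rcases Finset.mem_insert.1 hyX with h' | h'
    · exact absurd h' hy1
    · simpa using h'
  rw [h]
  intro a ha
  rcases Finset.mem_insert.1 ha with h' | h'
  · rw [h']; exact rp_one_mem Y
  · rw [Finset.mem_singleton.1 h', ← hyw]; exact hy

lemma rp_absorb_right {X : redPow H} {w : H} (hw : w ≠ 1)
    (hmul : (X : Finset H) * {1, w} = (X : Finset H))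
    (hne : (X : Finset H) ≠ {1, w}) : ¬ isIrred X := by
  have h1w : (1:H) ∈ ({1, w} : Finset H) := by simp
  set W : redPow H := ⟨{1, w}, h1w⟩ with hW
  have hwX : w ∈ (X : Finset H) := by
    rw [← hmul]
    simpa using Finset.mul_mem_mul (rp_one_mem X) (by simp : w ∈ ({1,w} : Finset H))
  have h1e : (1:H) ∈ (X : Finset H).erase w := Finset.mem_erase.2 ⟨Ne.symm hw, rp_one_mem X⟩
  set B : redPow H := ⟨(X : Finset H).erase w, h1e⟩ with hB
  have hsplit : X = B * W := by
    apply Subtype.ext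
    rw [rp_coe_mul]
    apply Finset.Subset.antisymm
    · intro x hx
      by_cases hxw : x = w
      · subst hxw
        simpa using Finset.mul_mem_mul h1e (by simp : x ∈ ({1,x} : Finset H))
      · simpa using Finset.mul_mem_mul (Finset.mem_erase.2 ⟨hxw, hx⟩)
          (by simp : (1:H) ∈ ({1,w} : Finset H))
    · calc ((B : Finset H) * (W : Finset H)) ⊆ (X : Finset H) * {1, w} :=
            Finset.mul_subset_mul_right (Finset.erase_subset _ _)
        _ = (X : Finset H) := hmul
  apply rp_notIrred_of_split hsplit
  · intro h
    apply hne
    have hBval : (X : Finset H).erase w = {1} := congrArg Subtype.val h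
    apply Finset.Subset.antisymm
    · intro a ha
      by_cases haw : a = w
      · simp [haw]
      · have : a ∈ (X : Finset H).erase w := Finset.mem_erase.2 ⟨haw, ha⟩
        rw [hBval] at this
        simp at this
        simp [this]
    · intro a ha
      rcases Finset.mem_insert.1 ha with h' | h'
      · rw [h']; exact rp_one_mem X
      · rw [Finset.mem_singleton.1 h']; exact hwX
  · intro h
    have : w ∈ ((1 : redPow H) : Finset H) := by rw [← h]; simp [hW]
    rw [rp_coe_one] at this
    exact hw (Finset.mem_singleton.1 this)
  · intro h
    have : w ∈ (B : Finset H) := by rw [h]; exact hwX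
    simp [hB] at this
  · intro h
    exact hne (by rw [← h])

lemma rp_absorb_left {X : redPow H} {w : H} (hw : w ≠ 1)
    (hmul : ({1, w} : Finset H) * (X : Finset H) = (X : Finset H))
    (hne : (X : Finset H) ≠ {1, w}) : ¬ isIrred X := by
  have h1w : (1:H) ∈ ({1, w} : Finset H) := by simp
  set W : redPow H := ⟨{1, w}, h1w⟩ with hW
  have hwX : w ∈ (X : Finset H) := by
    rw [← hmul]
    simpa using Finset.mul_mem_mul (by simp : w ∈ ({1,w} : Finset H)) (rp_one_mem X)
  have h1e : (1:H) ∈ (X : Finset H).erase w := Finset.mem_erase.2 ⟨Ne.symm hw, rp_one_mem X⟩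
  set B : redPow H := ⟨(X : Finset H).erase w, h1e⟩ with hB
  have hsplit : X = W * B := by
    apply Subtype.ext
    rw [rp_coe_mul]
    apply Finset.Subset.antisymm
    · intro x hx
      by_cases hxw : x = w
      · subst hxw
        simpa using Finset.mul_mem_mul (by simp : x ∈ ({1,x} : Finset H)) h1e
      · simpa using Finset.mul_mem_mul (by simp : (1:H) ∈ ({1,w} : Finset H))
          (Finset.mem_erase.2 ⟨hxw, hx⟩)
    · calc ((W : Finset H) * (B : Finset H)) ⊆ ({1, w} : Finset H) * (X : Finset H) :=
            Finset.mul_subset_mul_left (Finset.erase_subset _ _)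
        _ = (X : Finset H) := hmul
  apply rp_notIrred_of_split hsplit
  · intro h
    have : w ∈ ((1 : redPow H) : Finset H) := by rw [← h]; simp [hW]
    rw [rp_coe_one] at this
    exact hw (Finset.mem_singleton.1 this)
  · intro h
    apply hne
    have hBval : (X : Finset H).erase w = {1} := congrArg Subtype.val h
    apply Finset.Subset.antisymm
    · intro a ha
      by_cases haw : a = w
      · simp [haw]
      · have : a ∈ (X : Finset H).erase w := Finset.mem_erase.2 ⟨haw, ha⟩
        rw [hBval] at this
        simp at this
        simp [this]
    · intro a ha
      rcases Finset.mem_insert.1 ha with h' | h'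
      · rw [h']; exact rp_one_mem X
      · rw [Finset.mem_singleton.1 h']; exact hwX
  · intro h
    exact hne (by rw [← h])
  · intro h
    have : w ∈ (B : Finset H) := by rw [h]; exact hwX
    simp [hB] at this

end Aux2

section Aux3
variable {H : Type*} [Monoid H] [DecidableEq H]

lemma rp_factor_ne_one {U Y : redPow H} (hY : Y ≠ 1) : U * Y ≠ 1 := by
  intro h
  apply hY
  apply Subtype.ext
  rw [rp_coe_one]
  apply Finset.Subset.antisymm
  · have := rp_subset_mul_right U Y
    rw [h, rp_coe_one] at this
    exact this
  · simpa using rp_one_mem Y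

lemma rp_notIrred_absorb_right {X Z Y : redPow H} (hZ1 : Z ≠ 1) (hXZ : X = X * Z)
    (hYsub : (Y : Finset H) ⊆ (X : Finset H)) (hY1 : Y ≠ 1) (hYX : Y ≠ X) : ¬ isIrred X := by
  obtain ⟨w, hwZ, hw1⟩ := rp_exists_ne_one hZ1
  apply rp_absorb_right hw1 ?_ (rp_ne_pair hYsub hY1 hYX w)
  have hXZv : (X : Finset H) * (Z : Finset H) = (X : Finset H) := (congrArg Subtype.val hXZ).symm
  apply Finset.Subset.antisymm
  · refine subset_trans (Finset.mul_subset_mul_left ?_) (subset_of_eq hXZv)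
    intro a ha
    rcases Finset.mem_insert.1 ha with h' | h'
    · rw [h']; exact rp_one_mem Z
    · rw [Finset.mem_singleton.1 h']; exact hwZ
  · intro x hx
    simpa using Finset.mul_mem_mul hx (by simp : (1:H) ∈ ({1,w} : Finset H))

lemma rp_notIrred_absorb_left {X Z Y : redPow H} (hZ1 : Z ≠ 1) (hXZ : X = Z * X)
    (hYsub : (Y : Finset H) ⊆ (X : Finset H)) (hY1 : Y ≠ 1) (hYX : Y ≠ X) : ¬ isIrred X := by
  obtain ⟨w, hwZ, hw1⟩ := rp_exists_ne_one hZ1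
  apply rp_absorb_left hw1 ?_ (rp_ne_pair hYsub hY1 hYX w)
  have hXZv : (Z : Finset H) * (X : Finset H) = (X : Finset H) := (congrArg Subtype.val hXZ).symm
  apply Finset.Subset.antisymm
  · refine subset_trans (Finset.mul_subset_mul_right ?_) (subset_of_eq hXZv)
    intro a ha
    rcases Finset.mem_insert.1 ha with h' | h'
    · rw [h']; exact rp_one_mem Z
    · rw [Finset.mem_singleton.1 h']; exact hwZ
  · intro x hx
    simpa using Finset.mul_mem_mul (by simp : (1:H) ∈ ({1,w} : Finset H)) hx

end Aux3

theorem stmt_3 {H : Type*} [Monoid H] [DecidableEq H] (X : redPow H) :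
    isIrred X ↔ isQuarkTS X := by
  constructor
  · intro hirr
    refine ⟨hirr.1, ?_⟩
    rintro Y hYnu ⟨⟨U, V, hX⟩, hnd⟩
    have hXY : X ≠ Y := fun h => hnd ⟨1, 1, by rw [h, one_mul, mul_one]⟩
    have hY1 : Y ≠ 1 := rp_nonunit_iff.mp hYnu
    have hYsub : (Y : Finset H) ⊆ (X : Finset H) := rp_dvd_subset ⟨U, V, hX⟩
    by_cases hV1 : V = 1
    · have hX' : X = U * Y := by rw [hV1, mul_one] at hX; exact hX
      by_cases hU1 : U = 1
      · exact hXY (by rw [hX', hU1, one_mul])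
      · by_cases hUX : U = X
        · have hXX : X = X * Y := by rw [hUX] at hX'; exact hX'
          exact rp_notIrred_absorb_right hY1 hXX hYsub hY1 (Ne.symm hXY) hirr
        · exact rp_notIrred_of_split hX' hU1 hY1 hUX (Ne.symm hXY) hirr
    · by_cases hA : U * Y = X
      · have hXX : X = X * V := by rw [hA] at hX; exact hX
        exact rp_notIrred_absorb_right hV1 hXX hYsub hY1 (Ne.symm hXY) hirr
      · by_cases hVX : V = X
        · have hXX : X = (U * Y) * X := by rw [hVX] at hX; exact hX
          exact rp_notIrred_absorb_left (rp_factor_ne_one hY1) hXX hYsub hY1 (Ne.symm hXY) hirr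
        · exact rp_notIrred_of_split hX (rp_factor_ne_one hY1) hV1 hA hVX hirr
  · intro hq
    exact ⟨hq.1, fun x y hx _ hpx _ _ => (hq.2 x hx) hpx⟩
end

section
/- Let H be a monoid and let A be a nonempty finite subset of H ∖ {1_H} which is an antichain for the divisibility preorder of H, i.e. for all a, b ∈ A with a ≠ b, a does not divide b in H (b ≠ uav for all u, v ∈ H). Then the set {1_H} ∪ A is irreducible in 𝒫fin,1(H). -/
open scoped Pointwise

lemma subset_of_dvdTS_redPow {H : Type*} [Monoid H] [DecidableEq H]
    {X Y : redPow H} (h : dvdTS X Y) : (X : Finset H) ⊆ (Y : Finset H) := by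
  obtain ⟨U, V, h⟩ := h
  intro x hx
  have hco : (Y : Finset H) = (U : Finset H) * (X : Finset H) * (V : Finset H) := by
    rw [h]; rfl
  rw [hco]
  have h1U : (1 : H) ∈ (U : Finset H) := U.2
  have h1V : (1 : H) ∈ (V : Finset H) := V.2
  have := Finset.mul_mem_mul (Finset.mul_mem_mul h1U hx) h1V
  simpa using this

theorem stmt_5 {H : Type*} [Monoid H] [DecidableEq H] (A : Finset H)
    (hne : A.Nonempty) (h1 : (1 : H) ∉ A)
    (hanti : ∀ a ∈ A, ∀ b ∈ A, a ≠ b → ¬ dvdTS a b) :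
    isIrred (⟨insert (1 : H) A, by
      show (1 : H) ∈ insert (1 : H) A
      exact Finset.mem_insert_self 1 A⟩ : redPow H) := by
  set P : redPow H := ⟨insert (1 : H) A, Finset.mem_insert_self 1 A⟩ with hP
  obtain ⟨a0, ha0⟩ := hne
  constructor
  · rintro ⟨U, V, hUV⟩
    have hsub : (P : Finset H) ⊆ ((1 : redPow H) : Finset H) :=
      subset_of_dvdTS_redPow ⟨U, V, hUV⟩
    have : a0 ∈ ((1 : redPow H) : Finset H) := hsub (Finset.mem_insert_of_mem ha0)
    have : a0 = 1 := by simpa using this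
    exact h1 (this ▸ ha0)
  · intro X Y hX hY hXP hYP heq
    -- finset-level equality
    have hF : (insert (1 : H) A : Finset H) = (X : Finset H) * (Y : Finset H) := by
      have := congrArg (fun z : redPow H => (z : Finset H)) heq
      simpa using this
    have h1X : (1 : H) ∈ (X : Finset H) := X.2
    have h1Y : (1 : H) ∈ (Y : Finset H) := Y.2
    have hXsub : (X : Finset H) ⊆ insert (1 : H) A := by
      intro x hx
      rw [hF]
      simpa using Finset.mul_mem_mul hx h1Y
    have hYsub : (Y : Finset H) ⊆ insert (1 : H) A := by
      intro y hy
      rw [hF]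
      simpa using Finset.mul_mem_mul h1X hy
    -- X has an element of A
    have hXA : ∃ c ∈ (X : Finset H), c ∈ A := by
      by_contra hc
      push_neg at hc
      have hX1 : X = (1 : redPow H) := by
        apply Subtype.ext
        apply Finset.Subset.antisymm
        · intro x hx
          have := hXsub hx
          rcases Finset.mem_insert.1 this with h | h
          · simpa using h
          · exact absurd h (hc x hx)
        · intro x hx
          have : x = 1 := by simpa using hx
          exact this ▸ h1X
      exact hX (⟨1, 1, by rw [hX1]; simp⟩)
    have hYA : ∃ c ∈ (Y : Finset H), c ∈ A := by
      by_contra hc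
      push_neg at hc
      have hY1 : Y = (1 : redPow H) := by
        apply Subtype.ext
        apply Finset.Subset.antisymm
        · intro y hy
          have := hYsub hy
          rcases Finset.mem_insert.1 this with h | h
          · simpa using h
          · exact absurd h (hc y hy)
        · intro y hy
          have : y = 1 := by simpa using hy
          exact this ▸ h1Y
      exact hY (⟨1, 1, by rw [hY1]; simp⟩)
    obtain ⟨c, hcX, hcA⟩ := hXA
    obtain ⟨d, hdY, hdA⟩ := hYA
    -- key claim: elements of X ∩ A equal elements of Y ∩ A
    have key : ∀ a ∈ (X : Finset H), a ∈ A → ∀ b ∈ (Y : Finset H), b ∈ A → a = b := by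
      intro a haX haA b hbY hbA
      by_contra hab
      have hmem : a * b ∈ insert (1 : H) A := by
        rw [hF]; exact Finset.mul_mem_mul haX hbY
      rcases Finset.mem_insert.1 hmem with h | h
      · -- a * b = 1 : then a divides b
        exact hanti a haA b hbA hab ⟨1, b * b, by
          rw [one_mul, ← mul_assoc, h, one_mul]⟩
      · -- a * b ∈ A
        have ha' : a = a * b := by
          by_contra hne'
          exact hanti a haA (a * b) h hne' ⟨1, b, by rw [one_mul]⟩
        have hb' : b = a * b := by
          by_contra hne'
          exact hanti b hbA (a * b) h hne' ⟨a, 1, by rw [mul_one]⟩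
        exact hab (ha'.trans hb'.symm)
    -- every element of A lies in X
    have hAX : A ⊆ (X : Finset H) := by
      intro a haA
      have hmem : a ∈ (X : Finset H) * (Y : Finset H) := by
        rw [← hF]; exact Finset.mem_insert_of_mem haA
      obtain ⟨x, hxX, y, hyY, hxy⟩ := Finset.mem_mul.1 hmem
      by_cases hy1 : y = 1
      · have : x = a := by rw [hy1, mul_one] at hxy; exact hxy
        exact this ▸ hxX
      · have hyA : y ∈ A := by
          rcases Finset.mem_insert.1 (hYsub hyY) with h | h
          · exact absurd h hy1
          · exact h
        by_cases hx1 : x = 1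
        · have hay : a = y := by rw [hx1, one_mul] at hxy; exact hxy.symm
          have : c = a := by
            rw [hay]; exact key c hcX hcA y hyY hyA
          exact this ▸ hcX
        · have hxA : x ∈ A := by
            rcases Finset.mem_insert.1 (hXsub hxX) with h | h
            · exact absurd h hx1
            · exact h
          have hxy' : x = y := key x hxX hxA y hyY hyA
          have hax : a = x := by
            by_contra hne'
            exact hanti x hxA a haA (fun h => hne' h.symm)
              ⟨1, y, by rw [one_mul, hxy]⟩
          exact hax ▸ hxX
    -- hence X = P
    have hXeq : X = P := by
      apply Subtype.ext
      apply Finset.Subset.antisymm hXsub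
      intro z hz
      rcases Finset.mem_insert.1 hz with h | h
      · exact h ▸ h1X
      · exact hAX h
    exact hXP.2 ⟨1, 1, by rw [hXeq]; simp⟩
end

section
/- For a monoid H, the following are equivalent: (a) H is aperiodic, i.e. for every x ∈ H with x ≠ 1_H the submonoid generated by x is infinite; (b) 𝒫fin,1(H) is BF, i.e. every X ≠ {1_H} in 𝒫fin,1(H) admits a factorization into irreducibles and, for each X, the set of lengths of factorizations of X is bounded above; (c) 𝒫fin,1(H) is FF, i.e. every X ≠ {1_H} admits a factorization into irreducibles and has only finitely many factorizations up to permutation. -/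
open scoped Pointwise

/-- A bounded factorization (BF) monoid: every non-identity element has a factorization
into irreducibles, and factorization lengths of each element are bounded above. -/
def IsBF (M : Type*) [Monoid M] : Prop :=
  (∀ x : M, x ≠ 1 → ∃ l : List M, IsFactorization l x) ∧
    ∀ x : M, ∃ N : ℕ, ∀ l : List M, IsFactorization l x → l.length ≤ N

/-- A finite factorization (FF) monoid: every non-identity element has a factorization
into irreducibles, and each element has finitely many factorizations up to permutation. -/
def IsFF (M : Type*) [Monoid M] : Prop :=
  (∀ x : M, x ≠ 1 → ∃ l : List M, IsFactorization l x) ∧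
    ∀ x : M,
      {s : Multiset M | ∃ l : List M, (↑l : Multiset M) = s ∧ IsFactorization l x}.Finite

/-!
In `𝒫fin,1(H)` divisibility implies inclusion, since every element contains `1`. Hence
`{1}` is the only unit-divisor, proper divisors are strictly smaller, factorizations exist by
induction on cardinality, and all factors of `X` are among the finitely many subsets of `X`,
so bounded lengths already give finitely many factorizations.

If `H` is aperiodic, `A * B = B` with `A ≠ {1}` is impossible: it would put every power of
some `a ∈ A \ {1}` into `B`. So each factor strictly enlarges the product, and a factorization
of `X` has fewer than `|X|` factors. Conversely, a finite cyclic submonoid `⟨x⟩ ≠ {1}` is a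
non-identity idempotent of `𝒫fin,1(H)`, and an idempotent `X = X ^ n` has factorizations of
unbounded length.
-/

def IsAperiodic (H : Type*) [Monoid H] : Prop :=
  ∀ x : H, x ≠ 1 → (Submonoid.powers x : Set H).Infinite

lemma Set.Finite.setOf_list_length_le {α : Type*} {D : Set α} (hD : D.Finite) (N : ℕ) :
    {l : List α | l.length ≤ N ∧ ∀ a ∈ l, a ∈ D}.Finite := by
  have : Finite D := hD.to_subtype
  refine ((List.finite_length_le D N).image (List.map Subtype.val)).subset ?_
  rintro l ⟨hlen, hmem⟩
  lift l to List D using hmem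
  exact ⟨l, by simpa using hlen, rfl⟩

section Factorization

variable {M : Type*} [Monoid M]

lemma dvdTS_refl (x : M) : dvdTS x x := ⟨1, 1, by simp⟩

lemma dvdTS_prod_of_mem {l : List M} {a : M} (h : a ∈ l) : dvdTS a l.prod := by
  obtain ⟨s, t, rfl⟩ := List.append_of_mem h
  exact ⟨s.prod, t.prod, by rw [List.prod_append, List.prod_cons, mul_assoc]⟩

lemma IsFactorization.append {l l' : List M} {x y : M} (hl : IsFactorization l x)
    (hl' : IsFactorization l' y) : IsFactorization (l ++ l') (x * y) :=
  ⟨fun a ha => (List.mem_append.1 ha).elim (hl.1 a) (hl'.1 a),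
    by rw [List.prod_append, hl.2, hl'.2]⟩

lemma IsFactorization.ne_nil {l : List M} {x : M} (hl : IsFactorization l x) (hx : x ≠ 1) :
    l ≠ [] := by
  rintro rfl
  exact hx hl.2.symm

lemma IsBF.eq_one_of_mul_self (h : IsBF M) {x : M} (hx : x * x = x) : x = 1 := by
  by_contra hx1
  obtain ⟨l, hl⟩ := h.1 x hx1
  have hl_pos : 0 < l.length := List.length_pos_iff.2 (hl.ne_nil hx1)
  have unbounded : ∀ n, ∃ l', IsFactorization l' x ∧ n ≤ l'.length := by
    intro n
    induction n with
    | zero => exact ⟨l, hl, Nat.zero_le _⟩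
    | succ n ih =>
      obtain ⟨l', hl', hn⟩ := ih
      refine ⟨l ++ l', hx ▸ hl.append hl', ?_⟩
      rw [List.length_append]
      omega
  obtain ⟨N, hN⟩ := h.2 x
  obtain ⟨l', hl', hlen⟩ := unbounded (N + 1)
  have := hN l' hl'
  omega

lemma IsFF.isBF (h : IsFF M) : IsBF M := by
  refine ⟨h.1, fun x => ⟨(h.2 x).toFinset.sup Multiset.card, fun l hl => ?_⟩⟩
  have hmem : (l : Multiset M) ∈ (h.2 x).toFinset := (h.2 x).mem_toFinset.2 ⟨l, rfl, hl⟩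
  simpa using Finset.le_sup (f := Multiset.card) hmem

end Factorization

namespace redPow

variable {H : Type*} [Monoid H] [DecidableEq H]

lemma one_mem (X : redPow H) : (1 : H) ∈ (X : Finset H) := X.2

lemma coe_one : ((1 : redPow H) : Finset H) = {1} := rfl

lemma coe_mul (X Y : redPow H) : ((X * Y : redPow H) : Finset H) = (X : Finset H) * Y := rfl

lemma subset_mul_left (X Y : redPow H) : (X : Finset H) ⊆ ((X * Y : redPow H) : Finset H) :=
  Finset.subset_mul_left _ (one_mem Y)

lemma subset_mul_right (X Y : redPow H) : (Y : Finset H) ⊆ ((X * Y : redPow H) : Finset H) :=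
  Finset.subset_mul_right _ (one_mem X)

lemma subset_of_dvdTS {A X : redPow H} (h : dvdTS A X) : (A : Finset H) ⊆ X := by
  obtain ⟨U, V, rfl⟩ := h
  exact (subset_mul_right U A).trans (subset_mul_left (U * A) V)

lemma ssubset_of_properDvdTS {A X : redPow H} (h : properDvdTS A X) : (A : Finset H) ⊂ X :=
  (subset_of_dvdTS h.1).ssubset_of_ne fun he => h.2 (Subtype.ext he ▸ dvdTS_refl X)

lemma eq_one_iff_subset {A : redPow H} : A = 1 ↔ (A : Finset H) ⊆ {1} :=
  ⟨fun h => h ▸ subset_refl _,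
    fun h => Subtype.ext (h.antisymm (Finset.singleton_subset_iff.2 (one_mem A)))⟩

lemma isNonUnitDivisor_iff {A : redPow H} : isNonUnitDivisor A ↔ A ≠ 1 :=
  not_congr ⟨fun h => eq_one_iff_subset.2 (subset_of_dvdTS h),
    by rintro rfl; exact dvdTS_refl 1⟩

lemma exists_factorization (X : redPow H) (hX : X ≠ 1) : ∃ l, IsFactorization l X := by
  induction hn : (X : Finset H).card using Nat.strong_induction_on generalizing X with
  | _ n ih =>
    by_cases hirr : isIrred X
    · exact ⟨[X], by simpa [IsFactorization] using hirr⟩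
    obtain ⟨Y, Z, hY, hZ, hYX, hZX, rfl⟩ : ∃ Y Z, isNonUnitDivisor Y ∧
        isNonUnitDivisor Z ∧ properDvdTS Y X ∧ properDvdTS Z X ∧ X = Y * Z := by
      simpa [isIrred, isNonUnitDivisor_iff.2 hX] using hirr
    obtain ⟨lY, hlY⟩ := ih _ (hn ▸ Finset.card_lt_card (ssubset_of_properDvdTS hYX)) Y
      (isNonUnitDivisor_iff.1 hY) rfl
    obtain ⟨lZ, hlZ⟩ := ih _ (hn ▸ Finset.card_lt_card (ssubset_of_properDvdTS hZX)) Z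
      (isNonUnitDivisor_iff.1 hZ) rfl
    exact ⟨lY ++ lZ, hlY.append hlZ⟩

lemma card_lt_card_mul (hH : IsAperiodic H) {A : redPow H} (hA : A ≠ 1) (B : redPow H) :
    (B : Finset H).card < ((A * B : redPow H) : Finset H).card := by
  refine Finset.card_lt_card ((subset_mul_right A B).ssubset_of_ne fun hAB => ?_)
  obtain ⟨a, haA, ha1⟩ : ∃ a ∈ (A : Finset H), a ≠ 1 := by
    by_contra! h
    exact hA (eq_one_iff_subset.2 fun a ha => Finset.mem_singleton.2 (h a ha))
  refine hH a ha1 ((B : Finset H).finite_toSet.subset ?_)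
  rintro _ ⟨n, rfl⟩
  dsimp only
  induction n with
  | zero => simpa using one_mem B
  | succ n ih =>
    rw [pow_succ', Finset.mem_coe, hAB, coe_mul]
    exact Finset.mul_mem_mul haA ih

lemma length_lt_card_prod (hH : IsAperiodic H) (l : List (redPow H)) (hl : ∀ A ∈ l, A ≠ 1) :
    l.length < (l.prod : Finset H).card := by
  induction l with
  | nil => simp
  | cons A l ih =>
    have hA := card_lt_card_mul hH (hl A List.mem_cons_self) l.prod
    have hl := ih fun B hB => hl B (List.mem_cons_of_mem A hB)
    rw [List.prod_cons, List.length_cons]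
    omega

lemma isBF_of_isAperiodic (hH : IsAperiodic H) : IsBF (redPow H) := by
  refine ⟨exists_factorization, fun X => ⟨(X : Finset H).card, fun l hl => ?_⟩⟩
  have := length_lt_card_prod hH l fun A hA => isNonUnitDivisor_iff.1 (hl.1 A hA).1
  rw [hl.2] at this
  exact this.le

lemma isAperiodic_of_isBF (h : IsBF (redPow H)) : IsAperiodic H := by
  intro x hx1 hfin
  have h1 : (1 : H) ∈ hfin.toFinset := by simp
  let X : redPow H := ⟨hfin.toFinset, h1⟩
  have hX_idem : X * X = X := Subtype.ext <| Finset.coe_injective <| by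
    simp only [coe_mul, Finset.coe_mul, X, Set.Finite.coe_toFinset, Submonoid.coe_mul_self_eq]
  have hxX : x ∈ (X : Finset H) := by simp [X]
  exact hx1 (Finset.mem_singleton.1 (eq_one_iff_subset.1 (h.eq_one_of_mul_self hX_idem) hxX))

lemma isFF_of_isBF (h : IsBF (redPow H)) : IsFF (redPow H) := by
  refine ⟨h.1, fun X => ?_⟩
  obtain ⟨N, hN⟩ := h.2 X
  have hD : {A : redPow H | (A : Finset H) ⊆ X}.Finite :=
    ((X : Finset H).powerset.finite_toSet.preimage Subtype.val_injective.injOn).subset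
      fun A hA => by simpa using hA
  refine ((hD.setOf_list_length_le N).image
    ((↑) : List (redPow H) → Multiset (redPow H))).subset ?_
  rintro _ ⟨l, rfl, hl⟩
  exact ⟨l, ⟨hN l hl, fun A hA => subset_of_dvdTS (hl.2 ▸ dvdTS_prod_of_mem hA)⟩, rfl⟩

end redPow

theorem stmt_6 {H : Type*} [Monoid H] [DecidableEq H] :
    ((∀ x : H, x ≠ 1 → (Submonoid.powers x : Set H).Infinite) ↔ IsBF (redPow H)) ∧
    (IsBF (redPow H) ↔ IsFF (redPow H)) :=
  ⟨⟨redPow.isBF_of_isAperiodic, redPow.isAperiodic_of_isBF⟩,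
    ⟨redPow.isFF_of_isBF, IsFF.isBF⟩⟩
end

section
/- Let H be a monoid and suppose 𝒫fin,1(H) is UmF. Then: (i) the group of units H^× of H has at most 2 elements; (ii) uy = yu = y for every unit u ∈ H^× and every non-unit y ∈ H ∖ H^×; (iii) the set H ∖ H^× of non-units of H is closed under multiplication and is an almost-breakable semigroup. -/
open scoped Pointwise

namespace RPAux

section Lists
variable {M : Type*} [Monoid M]

lemma min2 {A B X : M} (hA : isIrred A) (hB : isIrred B) (hAB : A*B = X)
    (h1 : X ≠ 1) (h2 : X ≠ A) (h3 : X ≠ B) : IsMinimalFactorization [A, B] X := by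
  refine ⟨⟨by intro a ha; simp at ha; rcases ha with rfl | rfl <;> assumption,
    by simpa using hAB⟩, ?_⟩
  intro l' hlt hprod
  have hcard : Multiset.card (↑l' : Multiset M) < Multiset.card (↑[A,B] : Multiset M) :=
    Multiset.card_lt_card hlt
  simp at hcard
  have hsub : ∀ c ∈ l', c = A ∨ c = B := by
    intro c hc
    have : c ∈ (↑[A,B] : Multiset M) := Multiset.mem_of_le hlt.le (by simpa using hc)
    simpa using this
  match l' with
  | [] => simp at hprod; exact h1 hprod.symm
  | [c] =>
    simp at hprod
    rcases hsub c (by simp) with rfl | rfl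
    · exact h2 hprod.symm
    · exact h3 hprod.symm
  | c :: d :: l => simp at hcard

lemma min3 {A X : M} (hA : isIrred A) (hprod : A*A*A = X)
    (h1 : X ≠ 1) (h2 : X ≠ A) (h3 : X ≠ A*A) : IsMinimalFactorization [A, A, A] X := by
  refine ⟨⟨by intro a ha; simp at ha; rcases ha with rfl | rfl <;> assumption,
    by simp [← mul_assoc, hprod]⟩, ?_⟩
  intro l' hlt hp
  have hcard : Multiset.card (↑l' : Multiset M) < Multiset.card (↑[A,A,A] : Multiset M) :=
    Multiset.card_lt_card hlt
  simp at hcard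
  have hsub : ∀ c ∈ l', c = A := by
    intro c hc
    have : c ∈ (↑[A,A,A] : Multiset M) := Multiset.mem_of_le hlt.le (by simpa using hc)
    simpa using this
  match l' with
  | [] => simp at hp; exact h1 hp.symm
  | [c] =>
    obtain rfl := hsub c (by simp)
    simp at hp; exact h2 hp.symm
  | [c, d] =>
    obtain rfl := hsub c (by simp)
    obtain rfl := hsub d (by simp)
    simp at hp; exact h3 hp.symm
  | c :: d :: e :: l => simp at hcard; omega

end Lists

variable {H : Type*} [Monoid H] [DecidableEq H]

@[simp] lemma coe_mul (X Y : redPow H) : ((X*Y : redPow H) : Finset H) = (X:Finset H) * Y := rfl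
@[simp] lemma coe_one : ((1 : redPow H) : Finset H) = {1} := rfl
lemma one_mem (X : redPow H) : (1:H) ∈ (X : Finset H) := X.2

lemma rp_ext {X Y : redPow H} (h : (X : Finset H) = Y) : X = Y := Subtype.ext h

lemma ne_rp {X Y : redPow H} (z : H) (hz : z ∈ (X:Finset H)) (hz' : z ∉ (Y:Finset H)) :
    X ≠ Y := fun h => hz' (h ▸ hz)

lemma dvd_subset {X Y : redPow H} (h : dvdTS X Y) : (X : Finset H) ⊆ (Y : Finset H) := by
  obtain ⟨u, v, rfl⟩ := h
  intro x hx
  show x ∈ ((u*X*v : redPow H) : Finset H)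
  rw [coe_mul, coe_mul]
  simpa using Finset.mul_mem_mul (Finset.mul_mem_mul (one_mem u) hx) (one_mem v)

lemma nud_iff {X : redPow H} : isNonUnitDivisor X ↔ X ≠ 1 := by
  constructor
  · rintro h rfl; exact h ⟨1, 1, by simp⟩
  · intro hne hd
    apply hne
    apply rp_ext
    apply Finset.Subset.antisymm
    · simpa using dvd_subset hd
    · simp [Finset.singleton_subset_iff, one_mem]

lemma irred_of (X : redPow H) (hX : X ≠ 1)
    (h : ∀ P Q : redPow H, P ≠ 1 → Q ≠ 1 → P ≠ X → Q ≠ X → X ≠ P * Q) : isIrred X := by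
  refine ⟨nud_iff.2 hX, ?_⟩
  intro P Q hP hQ hPX hQX
  refine h P Q (nud_iff.1 hP) (nud_iff.1 hQ) ?_ ?_
  · rintro rfl; exact hPX.2 ⟨1, 1, by simp⟩
  · rintro rfl; exact hQX.2 ⟨1, 1, by simp⟩

def P2 (a : H) : redPow H := ⟨{1, a}, by simp [redPow]⟩

@[simp] lemma P2_coe (a : H) : ((P2 a : redPow H) : Finset H) = {1, a} := rfl

lemma subset_mul_right (P Q : redPow H) : (P : Finset H) ⊆ ((P*Q : redPow H) : Finset H) := by
  intro x hx; rw [coe_mul]; simpa using Finset.mul_mem_mul hx (one_mem Q)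

lemma P2_ne_one {a : H} (ha : a ≠ 1) : (P2 a : redPow H) ≠ 1 :=
  ne_rp a (by simp) (by simpa using ha)

lemma P2_inj {a b : H} (ha : a ≠ 1) (hcon : (P2 a : redPow H) = P2 b) : a = b := by
  have : a ∈ ({1, b} : Finset H) := by
    have h2 := congrArg (fun X : redPow H => (X : Finset H)) hcon
    simp only [P2_coe] at h2
    rw [← h2]; simp
  simp at this; tauto

lemma P2_irred {a : H} (ha : a ≠ 1) : isIrred (P2 a : redPow H) := by
  apply irred_of _ (P2_ne_one ha)
  intro P Q hP hQ hPX hQX heq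
  have hsub : (P : Finset H) ⊆ {1, a} := by
    have := subset_mul_right P Q
    rw [← heq] at this; simpa using this
  apply hPX
  apply rp_ext
  rw [P2_coe]
  apply Finset.Subset.antisymm hsub
  intro z hz
  simp at hz
  rcases hz with rfl | rfl
  · exact one_mem P
  · by_contra hna
    apply hP
    apply rp_ext
    rw [coe_one]
    apply Finset.Subset.antisymm
    · intro w hw
      have := hsub hw
      simp at this ⊢
      rcases this with rfl | rfl
      · rfl
      · exact absurd hw hna
    · simp [Finset.singleton_subset_iff, one_mem]

lemma val_P2P2 (a b : H) : ((P2 a * P2 b : redPow H) : Finset H) = {1, a, b, a*b} := by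
  rw [coe_mul, P2_coe, P2_coe]; ext z; simp [Finset.mem_mul]; try tauto

variable (hU : IsUmF (redPow H))
include hU

lemma cube (a : H) : a*a*a = 1 ∨ a*a*a = a ∨ a*a*a = a*a := by
  by_contra hc
  push_neg at hc
  obtain ⟨h1, h2, h3⟩ := hc
  have ha1 : a ≠ 1 := by rintro rfl; exact h1 (by simp)
  have haa1 : a*a ≠ 1 := fun e => h2 (by rw [e, one_mul])
  have haaa : a*a ≠ a := fun e => h3 (by rw [e]; exact e)
  obtain ⟨X, hX⟩ : ∃ X : redPow H, (X : Finset H) = {1, a, a*a, a*a*a} :=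
    ⟨⟨_, by simp [redPow]⟩, rfl⟩
  have valAA : (((P2 a : redPow H)*(P2 a : redPow H) : redPow H) : Finset H) = {1, a, a*a} := by
    rw [val_P2P2]; ext z; simp; try tauto
  have valAAA : (P2 a : redPow H)*(P2 a : redPow H)*(P2 a : redPow H) = X := by
    apply rp_ext
    rw [coe_mul, valAA, P2_coe, hX]
    ext z; simp [Finset.mem_mul]; try tauto
  have valAC : (P2 a : redPow H)*(P2 (a*a) : redPow H) = X := by
    apply rp_ext
    rw [val_P2P2, hX]
    ext z; simp [← mul_assoc]; try tauto
  have hX1 : X ≠ 1 := ne_rp a (by rw [hX]; simp) (by simpa using ha1)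
  have hXA : X ≠ (P2 a : redPow H) := ne_rp (a*a) (by rw [hX]; simp) (by simp [haa1, haaa])
  have hXAA : X ≠ (P2 a : redPow H)*(P2 a : redPow H) := ne_rp (a*a*a) (by rw [hX]; simp) (by rw [valAA]; simp [h1, h2, h3])
  have hXC : X ≠ (P2 (a*a) : redPow H) := ne_rp a (by rw [hX]; simp) (by simp [ha1, Ne.symm haaa])
  have m1 := min3 (P2_irred ha1) valAAA hX1 hXA hXAA
  have m2 := min2 (P2_irred ha1) (P2_irred haa1) valAC hX1 hXA hXC
  have hperm := hU.2 X _ _ m1 m2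
  have := hperm.length_eq
  simp at this

lemma no3 {a : H} (h3 : a*a*a = 1) : a = 1 := by
  by_contra ha1
  have haa1 : a*a ≠ 1 := by
    intro e
    apply ha1
    rw [← h3, e, one_mul]
  have haaa : a*a ≠ a := by
    intro e
    apply ha1
    rw [← h3, e]; exact e.symm
  obtain ⟨X, hX⟩ : ∃ X : redPow H, (X : Finset H) = {1, a, a*a} := ⟨⟨_, by simp [redPow]⟩, rfl⟩
  have valAA : (P2 a : redPow H)*(P2 a : redPow H) = X := by
    apply rp_ext; rw [val_P2P2, hX]; ext z; simp; try tauto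
  have valAB : (P2 a : redPow H)*(P2 (a*a) : redPow H) = X := by
    apply rp_ext; rw [val_P2P2, hX]
    ext z; simp [← mul_assoc, h3]; try tauto
  have hX1 : X ≠ 1 := ne_rp a (by rw [hX]; simp) (by simpa using ha1)
  have hXA : X ≠ (P2 a : redPow H) := ne_rp (a*a) (by rw [hX]; simp) (by simp [haa1, haaa])
  have hXB : X ≠ (P2 (a*a) : redPow H) := ne_rp a (by rw [hX]; simp) (by simp [ha1, Ne.symm haaa])
  have m1 := min2 (P2_irred ha1) (P2_irred ha1) valAA hX1 hXA hXA
  have m2 := min2 (P2_irred ha1) (P2_irred haa1) valAB hX1 hXA hXB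
  have hperm := hU.2 X _ _ m1 m2
  have hBm : (P2 (a*a) : redPow H) ∈ [(P2 a : redPow H), (P2 a : redPow H)] := hperm.mem_iff.2 (by simp)
  simp at hBm
  exact haaa (P2_inj haa1 hBm)

lemma unit_sq {u : H} (hu : IsUnit u) : u*u = 1 := by
  rcases cube hU u with hc | hc | hc
  · rw [no3 hU hc, one_mul]
  · exact hu.mul_right_cancel (by rw [one_mul]; exact hc)
  · have h1 : u*(u*u) = u*u := by rw [← mul_assoc]; exact hc
    have h2 : u*u = u := hu.mul_left_cancel h1
    have h3 : u = 1 := hu.mul_left_cancel (by rw [h2, mul_one])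
    rw [h3, one_mul]

lemma idem {x : H} (hx : ¬ IsUnit x) : x*x = x := by
  by_contra hxx
  have hx1 : x ≠ 1 := by rintro rfl; exact hx isUnit_one
  have hxx1 : x*x ≠ 1 := fun e => hx ⟨⟨x, x, e, e⟩, rfl⟩
  have hc : x*x*x = x ∨ x*x*x = x*x := by
    rcases cube hU x with hc | hc | hc
    · exact absurd (no3 hU hc) hx1
    · exact Or.inl hc
    · exact Or.inr hc
  obtain ⟨X, hX⟩ : ∃ X : redPow H, (X : Finset H) = {1, x, x*x} := ⟨⟨_, by simp [redPow]⟩, rfl⟩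
  have valAA : (P2 x : redPow H)*(P2 x : redPow H) = X := by
    apply rp_ext; rw [val_P2P2, hX]; ext z; simp; try tauto
  have valAC : (P2 x : redPow H)*(P2 (x*x) : redPow H) = X := by
    apply rp_ext; rw [val_P2P2, hX]
    ext z; rcases hc with e | e <;> simp [← mul_assoc, e] <;> try tauto
  have hX1 : X ≠ 1 := ne_rp x (by rw [hX]; simp) (by simpa using hx1)
  have hXA : X ≠ (P2 x : redPow H) := ne_rp (x*x) (by rw [hX]; simp) (by simp [hxx1, hxx])
  have hXC : X ≠ (P2 (x*x) : redPow H) := ne_rp x (by rw [hX]; simp) (by simp [hx1, Ne.symm hxx])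
  have m1 := min2 (P2_irred hx1) (P2_irred hx1) valAA hX1 hXA hXA
  have m2 := min2 (P2_irred hx1) (P2_irred hxx1) valAC hX1 hXA hXC
  have hperm := hU.2 X _ _ m1 m2
  have hCm : (P2 (x*x) : redPow H) ∈ [(P2 x : redPow H), (P2 x : redPow H)] := hperm.mem_iff.2 (by simp)
  simp at hCm
  exact hxx (P2_inj hxx1 hCm)

lemma nonunit_mul {x y : H} (hx : ¬ IsUnit x) (hy : ¬ IsUnit y) : ¬ IsUnit (x*y) := by
  intro hu
  have hw2 : (x*y)*(x*y) = 1 := unit_sq hU hu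
  have hxx : x*x = x := idem hU hx
  have hxw : x*(x*y) = x*y := by rw [← mul_assoc, hxx]
  have : x = 1 := by
    calc x = x * ((x*y)*(x*y)) := by rw [hw2, mul_one]
    _ = (x*(x*y))*(x*y) := by rw [← mul_assoc, ← mul_assoc]
    _ = (x*y)*(x*y) := by rw [hxw]
    _ = 1 := hw2
  exact hx (this ▸ isUnit_one)

lemma units_eq {u v : H} (hu : IsUnit u) (hv : IsUnit v) (hu1 : u ≠ 1) (hv1 : v ≠ 1) :
    u = v := by
  by_contra huv
  have hu2 : u*u = 1 := unit_sq hU hu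
  have hv2 : v*v = 1 := unit_sq hU hv
  have huv1 : u*v ≠ 1 := by
    intro e
    apply huv
    have : v = u := by
      calc v = (u*u)*v := by rw [hu2, one_mul]
      _ = u*(u*v) := mul_assoc ..
      _ = u := by rw [e, mul_one]
    exact this.symm
  have huvu : u*v ≠ u := by
    intro e
    apply hv1
    calc v = (u*u)*v := by rw [hu2, one_mul]
    _ = u*(u*v) := mul_assoc ..
    _ = u*u := by rw [e]
    _ = 1 := hu2
  have huvv : u*v ≠ v := by
    intro e
    apply hu1
    calc u = u*(v*v) := by rw [hv2, mul_one]
    _ = (u*v)*v := (mul_assoc ..).symm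
    _ = v*v := by rw [e]
    _ = 1 := hv2
  obtain ⟨X, hX⟩ : ∃ X : redPow H, (X : Finset H) = {1, u, v, u*v} := ⟨⟨_, by simp [redPow]⟩, rfl⟩
  have valAB : (P2 u : redPow H)*(P2 v : redPow H) = X := by
    apply rp_ext; rw [val_P2P2, hX]
  have valAC : (P2 u : redPow H)*(P2 (u*v) : redPow H) = X := by
    apply rp_ext; rw [val_P2P2, hX]
    ext z; simp [← mul_assoc, hu2]; try tauto
  have hX1 : X ≠ 1 := ne_rp u (by rw [hX]; simp) (by simpa using hu1)
  have hXA : X ≠ (P2 u : redPow H) :=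
    ne_rp v (by rw [hX]; simp) (by simp [hv1, Ne.symm huv])
  have hXB : X ≠ (P2 v : redPow H) :=
    ne_rp u (by rw [hX]; simp) (by simp [hu1, huv])
  have hXC : X ≠ (P2 (u*v) : redPow H) :=
    ne_rp u (by rw [hX]; simp) (by simp [hu1, Ne.symm huvu])
  have m1 := min2 (P2_irred hu1) (P2_irred hv1) valAB hX1 hXA hXB
  have m2 := min2 (P2_irred hu1) (P2_irred huv1) valAC hX1 hXA hXC
  have hperm := hU.2 X _ _ m1 m2
  have hBm : (P2 v : redPow H) ∈ [(P2 u : redPow H), (P2 (u*v) : redPow H)] :=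
    hperm.mem_iff.1 (by simp)
  simp at hBm
  rcases hBm with e | e
  · exact huv (P2_inj hv1 e).symm
  · exact huvv (P2_inj hv1 e).symm

lemma unit_act_left {u y : H} (hu : IsUnit u) (hy : ¬ IsUnit y) : u*y = y := by
  by_cases hu1 : u = 1
  · rw [hu1, one_mul]
  have hu2 : u*u = 1 := unit_sq hU hu
  by_contra hne
  have hy1 : y ≠ 1 := by rintro rfl; exact hy isUnit_one
  have hyu : y ≠ u := by rintro rfl; exact hy hu
  have huy1 : u*y ≠ 1 := by
    intro e
    apply hy
    have : y = u := by
      calc y = (u*u)*y := by rw [hu2, one_mul]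
      _ = u*(u*y) := mul_assoc ..
      _ = u := by rw [e, mul_one]
    rw [this]; exact hu
  have huyu : u*y ≠ u := by
    intro e
    apply hy1
    calc y = (u*u)*y := by rw [hu2, one_mul]
    _ = u*(u*y) := mul_assoc ..
    _ = u*u := by rw [e]
    _ = 1 := hu2
  obtain ⟨X, hX⟩ : ∃ X : redPow H, (X : Finset H) = {1, u, y, u*y} := ⟨⟨_, by simp [redPow]⟩, rfl⟩
  have valAB : (P2 u : redPow H)*(P2 y : redPow H) = X := by
    apply rp_ext; rw [val_P2P2, hX]
  have valAC : (P2 u : redPow H)*(P2 (u*y) : redPow H) = X := by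
    apply rp_ext; rw [val_P2P2, hX]
    ext z; simp [← mul_assoc, hu2]; try tauto
  have hX1 : X ≠ 1 := ne_rp u (by rw [hX]; simp) (by simpa using hu1)
  have hXA : X ≠ (P2 u : redPow H) :=
    ne_rp y (by rw [hX]; simp) (by simp [hy1, hyu])
  have hXB : X ≠ (P2 y : redPow H) :=
    ne_rp u (by rw [hX]; simp) (by simp [hu1, Ne.symm hyu])
  have hXC : X ≠ (P2 (u*y) : redPow H) :=
    ne_rp u (by rw [hX]; simp) (by simp [hu1, Ne.symm huyu])
  have m1 := min2 (P2_irred hu1) (P2_irred hy1) valAB hX1 hXA hXB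
  have m2 := min2 (P2_irred hu1) (P2_irred huy1) valAC hX1 hXA hXC
  have hperm := hU.2 X _ _ m1 m2
  have hBm : (P2 y : redPow H) ∈ [(P2 u : redPow H), (P2 (u*y) : redPow H)] :=
    hperm.mem_iff.1 (by simp)
  simp at hBm
  rcases hBm with e | e
  · exact hyu (P2_inj hy1 e)
  · exact hne (P2_inj hy1 e).symm

lemma unit_act_right {u y : H} (hu : IsUnit u) (hy : ¬ IsUnit y) : y*u = y := by
  by_cases hu1 : u = 1
  · rw [hu1, mul_one]
  have hu2 : u*u = 1 := unit_sq hU hu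
  by_contra hne
  have hy1 : y ≠ 1 := by rintro rfl; exact hy isUnit_one
  have hyu : y ≠ u := by rintro rfl; exact hy hu
  have hyuu : ∀ w, y*u = w → y = w*u := by
    intro w e
    calc y = y*(u*u) := by rw [hu2, mul_one]
    _ = (y*u)*u := (mul_assoc ..).symm
    _ = w*u := by rw [e]
  have hyu1 : y*u ≠ 1 := by
    intro e
    apply hy
    have := hyuu 1 e
    rw [one_mul] at this
    rw [this]; exact hu
  have hyuU : y*u ≠ u := by
    intro e
    apply hy1
    rw [hyuu u e, hu2]
  obtain ⟨X, hX⟩ : ∃ X : redPow H, (X : Finset H) = {1, y, u, y*u} := ⟨⟨_, by simp [redPow]⟩, rfl⟩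
  have valBA : (P2 y : redPow H)*(P2 u : redPow H) = X := by
    apply rp_ext; rw [val_P2P2, hX]
  have valCA : (P2 (y*u) : redPow H)*(P2 u : redPow H) = X := by
    apply rp_ext; rw [val_P2P2, hX]
    ext z; simp [mul_assoc, hu2]; try tauto
  have hX1 : X ≠ 1 := ne_rp y (by rw [hX]; simp) (by simpa using hy1)
  have hXB : X ≠ (P2 y : redPow H) :=
    ne_rp u (by rw [hX]; simp) (by simp [hu1, Ne.symm hyu])
  have hXA : X ≠ (P2 u : redPow H) :=
    ne_rp y (by rw [hX]; simp) (by simp [hy1, hyu])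
  have hXC : X ≠ (P2 (y*u) : redPow H) :=
    ne_rp u (by rw [hX]; simp) (by simp [hu1, Ne.symm hyuU])
  have m1 := min2 (P2_irred hy1) (P2_irred hu1) valBA hX1 hXB hXA
  have m2 := min2 (P2_irred hyu1) (P2_irred hu1) valCA hX1 hXC hXA
  have hperm := hU.2 X _ _ m1 m2
  have hBm : (P2 y : redPow H) ∈ [(P2 (y*u) : redPow H), (P2 u : redPow H)] :=
    hperm.mem_iff.1 (by simp)
  simp at hBm
  rcases hBm with e | e
  · exact hne (P2_inj hy1 e).symm
  · exact hyu (P2_inj hy1 e)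


lemma almost_break {x y : H} (hx : ¬ IsUnit x) (hy : ¬ IsUnit y) :
    (x * y = x ∨ x * y = y) ∨ (y * x = x ∨ y * x = y) := by
  by_contra hc
  push_neg at hc
  obtain ⟨⟨h1, h2⟩, h3, h4⟩ := hc
  have hxx : x*x = x := idem hU hx
  have hyy : y*y = y := idem hU hy
  have hx1 : x ≠ 1 := by rintro rfl; exact hx isUnit_one
  have hy1 : y ≠ 1 := by rintro rfl; exact hy isUnit_one
  have hxy : x ≠ y := by
    rintro rfl
    exact h1 hxx
  have hxy1 : x*y ≠ 1 := by
    intro e; exact nonunit_mul hU hx hy (e ▸ isUnit_one)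
  have hyx1 : y*x ≠ 1 := by
    intro e; exact nonunit_mul hU hy hx (e ▸ isUnit_one)
  obtain ⟨W, hW⟩ : ∃ W : redPow H, (W : Finset H) = {1, x, y} := ⟨⟨_, by simp [redPow]⟩, rfl⟩
  obtain ⟨X, hX⟩ : ∃ X : redPow H, (X : Finset H) = {1, x, y, x*y} := ⟨⟨_, by simp [redPow]⟩, rfl⟩
  -- classification of nontrivial proper "subsets" of W
  have key : ∀ P : redPow H, (P : Finset H) ⊆ {1, x, y} → P ≠ 1 → P ≠ W →
      P = P2 x ∨ P = P2 y := by
    intro P hs hP1 hPW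
    by_cases hxP : x ∈ (P : Finset H) <;> by_cases hyP : y ∈ (P : Finset H)
    · exfalso
      apply hPW
      apply rp_ext
      rw [hW]
      apply Finset.Subset.antisymm hs
      simp [Finset.insert_subset_iff, one_mem, hxP, hyP]
    · left
      apply rp_ext
      rw [P2_coe]
      apply Finset.Subset.antisymm
      · intro z hz
        have := hs hz
        simp at this ⊢
        rcases this with rfl | rfl | rfl
        · left; rfl
        · right; rfl
        · exact absurd hz hyP
      · simp [Finset.insert_subset_iff, one_mem, hxP]
    · right
      apply rp_ext
      rw [P2_coe]
      apply Finset.Subset.antisymm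
      · intro z hz
        have := hs hz
        simp at this ⊢
        rcases this with rfl | rfl | rfl
        · left; rfl
        · exact absurd hz hxP
        · right; rfl
      · simp [Finset.insert_subset_iff, one_mem, hyP]
    · exfalso
      apply hP1
      apply rp_ext
      rw [coe_one]
      apply Finset.Subset.antisymm
      · intro z hz
        have := hs hz
        simp at this ⊢
        rcases this with rfl | rfl | rfl
        · rfl
        · exact absurd hz hxP
        · exact absurd hz hyP
      · simp [Finset.singleton_subset_iff, one_mem]
  have hW1 : W ≠ 1 := ne_rp x (by rw [hW]; simp) (by simpa using hx1)
  -- the four pair products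
  have valAA : ((P2 x * P2 x : redPow H) : Finset H) = {1, x} := by
    rw [val_P2P2, hxx]; ext z; simp; try tauto
  have valBB : ((P2 y * P2 y : redPow H) : Finset H) = {1, y} := by
    rw [val_P2P2, hyy]; ext z; simp; try tauto
  have hWirr : isIrred W := by
    apply irred_of _ hW1
    intro P Q hP hQ hPW hQW heq
    have hPs : (P : Finset H) ⊆ {1, x, y} := by
      have := subset_mul_right P Q
      rw [← heq, hW] at this; exact this
    have hQs : (Q : Finset H) ⊆ {1, x, y} := by
      have hsub : (Q : Finset H) ⊆ ((P*Q : redPow H) : Finset H) := by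
        intro z hz; rw [coe_mul]; simpa using Finset.mul_mem_mul (one_mem P) hz
      rw [← heq, hW] at hsub; exact hsub
    have hval := congrArg (fun Z : redPow H => (Z : Finset H)) heq
    simp only [hW] at hval
    rcases key P hPs hP hPW with rfl | rfl <;> rcases key Q hQs hQ hQW with rfl | rfl
    · rw [valAA] at hval
      have : y ∈ ({1, x} : Finset H) := by rw [← hval]; simp
      simp [Ne.symm hxy, hy1] at this
    · rw [val_P2P2] at hval
      have : x*y ∈ ({1, x, y} : Finset H) := by rw [hval]; simp
      simp [hxy1, h1, h2] at this
    · rw [val_P2P2] at hval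
      have : y*x ∈ ({1, x, y} : Finset H) := by rw [hval]; simp
      simp [hyx1, h3, h4] at this
    · rw [valBB] at hval
      have : x ∈ ({1, y} : Finset H) := by rw [← hval]; simp
      simp [hxy, hx1] at this
  have valAB : (P2 x : redPow H)*(P2 y : redPow H) = X := by
    apply rp_ext; rw [val_P2P2, hX]
  have valAW : (P2 x : redPow H)*W = X := by
    apply rp_ext
    rw [coe_mul, P2_coe, hW, hX]
    ext z; simp [Finset.mem_mul, hxx]; try tauto
  have hX1 : X ≠ 1 := ne_rp x (by rw [hX]; simp) (by simpa using hx1)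
  have hXA : X ≠ (P2 x : redPow H) :=
    ne_rp y (by rw [hX]; simp) (by simp [hy1, Ne.symm hxy])
  have hXB : X ≠ (P2 y : redPow H) :=
    ne_rp x (by rw [hX]; simp) (by simp [hx1, hxy])
  have hXW : X ≠ W := ne_rp (x*y) (by rw [hX]; simp) (by rw [hW]; simp [hxy1, h1, h2])
  have m1 := min2 (P2_irred hx1) (P2_irred hy1) valAB hX1 hXA hXB
  have m2 := min2 (P2_irred hx1) hWirr valAW hX1 hXA hXW
  have hperm := hU.2 X _ _ m1 m2
  have hWm : W ∈ [(P2 x : redPow H), (P2 y : redPow H)] := hperm.mem_iff.2 (by simp)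
  simp at hWm
  rcases hWm with e | e
  · have : y ∈ ({1, x} : Finset H) := by
      have hv := congrArg (fun Z : redPow H => (Z : Finset H)) e
      simp only [hW, P2_coe] at hv
      rw [← hv]; simp
    simp [hy1, Ne.symm hxy] at this
  · have : x ∈ ({1, y} : Finset H) := by
      have hv := congrArg (fun Z : redPow H => (Z : Finset H)) e
      simp only [hW, P2_coe] at hv
      rw [← hv]; simp
    simp [hx1, hxy] at this


end RPAux

theorem stmt_9 {H : Type*} [Monoid H] [DecidableEq H] (h : IsUmF (redPow H)) :
    Set.encard {u : H | IsUnit u} ≤ 2 ∧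
    (∀ u y : H, IsUnit u → ¬ IsUnit y → u * y = y ∧ y * u = y) ∧
    (∀ x y : H, ¬ IsUnit x → ¬ IsUnit y → ¬ IsUnit (x * y)) ∧
    (∀ x y : H, ¬ IsUnit x → ¬ IsUnit y →
      (x * y = x ∨ x * y = y) ∨ (y * x = x ∨ y * x = y)) := by
  refine ⟨?_, fun u y hu hy => ⟨RPAux.unit_act_left h hu hy, RPAux.unit_act_right h hu hy⟩,
    fun x y hx hy => RPAux.nonunit_mul h hx hy,
    fun x y hx hy => RPAux.almost_break h hx hy⟩
  by_cases hw : ∃ w : H, IsUnit w ∧ w ≠ 1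
  · obtain ⟨w, hwu, hw1⟩ := hw
    have hsub : {u : H | IsUnit u} ⊆ {1, w} := by
      intro u hu
      by_cases hu1 : u = 1
      · exact Or.inl hu1
      · exact Or.inr (RPAux.units_eq h hu hwu hu1 hw1)
    calc Set.encard {u : H | IsUnit u} ≤ Set.encard ({1, w} : Set H) :=
        Set.encard_le_encard hsub
    _ ≤ 2 := by
      rw [Set.encard_pair (Ne.symm hw1)]
  · push_neg at hw
    have hsub : {u : H | IsUnit u} ⊆ {1} := fun u hu => hw u hu
    calc Set.encard {u : H | IsUnit u} ≤ Set.encard ({1} : Set H) :=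
        Set.encard_le_encard hsub
    _ ≤ 2 := by rw [Set.encard_singleton]; norm_num
end

section
/- Let S be an almost-breakable semigroup. Then the principal two-sided ideals of S form a chain under inclusion: for all x, y ∈ S, either SxS ⊆ SyS or SyS ⊆ SxS, where SxS := {uxv : u, v ∈ S}. -/
/-- The principal two-sided ideal `SxS = {u * x * v : u, v ∈ S}` generated by `x`. -/
def pIdeal {S : Type*} [Mul S] (x : S) : Set S := {z : S | ∃ u v : S, z = u * x * v}

lemma pIdeal_sub {S : Type*} [Semigroup S] {x y : S} (a b : S) (h : y = a * x * b) :
    pIdeal y ⊆ pIdeal x := by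
  rintro z ⟨u, v, rfl⟩
  exact ⟨u * a, b * v, by rw [h]; simp [mul_assoc]⟩

theorem stmt_12 {S : Type*} [Semigroup S]
    (hab : ∀ x y : S, (x * y = x ∨ x * y = y) ∨ (y * x = x ∨ y * x = y))
    (x y : S) :
    pIdeal x ⊆ pIdeal y ∨ pIdeal y ⊆ pIdeal x := by
  have idem : ∀ a : S, a * a = a := fun a => by rcases hab a a with (h | h) | (h | h) <;> exact h
  rcases hab x y with (h | h) | (h | h)
  · exact Or.inl (pIdeal_sub x y (by rw [mul_assoc, idem, h]))
  · exact Or.inr (pIdeal_sub x y (by rw [idem, h]))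
  · exact Or.inl (pIdeal_sub y x (by rw [idem, h]))
  · exact Or.inr (pIdeal_sub y x (by rw [mul_assoc, idem, h]))
end

section
/- Let S be an almost-breakable semigroup and x, y ∈ S. (i) If SxS ⊊ SyS (strict inclusion of principal two-sided ideals), then xyx = x and the elements xy, yx, x generate the same principal two-sided ideal: S(xy)S = S(yx)S = SxS. (ii) If SxS = SyS, then {xy, yx} = {x, y}. -/
theorem stmt_13 {S : Type*} [Semigroup S]
    (hab : ∀ x y : S, (x * y = x ∨ x * y = y) ∨ (y * x = x ∨ y * x = y))
    (x y : S) :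
    (pIdeal x ⊂ pIdeal y →
      x * y * x = x ∧ pIdeal (x * y) = pIdeal x ∧ pIdeal (y * x) = pIdeal x) ∧
    (pIdeal x = pIdeal y → ({x * y, y * x} : Set S) = {x, y}) := by
  have idem : ∀ a : S, a * a = a := by
    intro a; rcases hab a a with (h | h) | (h | h) <;> exact h
  -- key band identity: (u*a*v)*a*(u*a*v) = u*a*v
  have sand : ∀ u a v : S, (u * a * v) * a * (u * a * v) = u * a * v := by
    intro u a v
    have e1 : a * (v * (a * v)) = a * v := by
      have h := idem (a * v); rwa [mul_assoc] at h
    have e2 := idem (u * (a * (v * a)))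
    have e3 := congrArg (· * v) e2
    simp only [mul_assoc] at e3
    calc (u * a * v) * a * (u * a * v)
        = u * (a * (v * (a * (u * (a * v))))) := by simp only [mul_assoc]
      _ = u * (a * (v * (a * (u * (a * (v * (a * v))))))) := by rw [e1]
      _ = u * (a * (v * (a * v))) := e3
      _ = u * (a * v) := by rw [e1]
      _ = u * a * v := (mul_assoc u a v).symm
  have mem_self : ∀ a : S, a ∈ pIdeal a := by
    intro a; exact ⟨a, a, by rw [idem, idem]⟩
  have sub_of_mem : ∀ a b : S, a ∈ pIdeal b → pIdeal a ⊆ pIdeal b := by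
    rintro a b ⟨u, v, h⟩ z ⟨p, q, hz⟩
    exact ⟨p * u, v * q, by rw [hz, h]; simp only [mul_assoc]⟩
  have sandmem : ∀ a b : S, a ∈ pIdeal b → a * b * a = a := by
    rintro a b ⟨u, v, h⟩; rw [h]; exact sand u b v
  constructor
  · intro hlt
    have hx : x * y * x = x := by
      rcases hab x y with (h | h) | (h | h)
      · rw [h, idem]
      · exact absurd (sub_of_mem y x ⟨x, y, by rw [idem, h]⟩) hlt.2
      · rw [mul_assoc, h, idem]
      · exact absurd (sub_of_mem y x ⟨y, x, by rw [mul_assoc, idem, h]⟩) hlt.2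
    refine ⟨hx, ?_, ?_⟩
    · apply Set.Subset.antisymm
      · exact sub_of_mem _ _ ⟨x, y, by rw [idem]⟩
      · exact sub_of_mem _ _ ⟨x * y, x, by rw [idem, hx]⟩
    · apply Set.Subset.antisymm
      · exact sub_of_mem _ _ ⟨y, x, by rw [mul_assoc, idem]⟩
      · refine sub_of_mem _ _ ⟨x, y * x, ?_⟩
        have h5 : x * (y * x) = x := by rw [← mul_assoc]; exact hx
        rw [h5, h5]
  · intro heq
    have hyx : y * x * y = y := sandmem y x (by rw [heq]; exact mem_self y)
    have hxy : x * y * x = x := sandmem x y (by rw [← heq]; exact mem_self x)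
    rcases hab x y with (h | h) | (h | h)
    · -- x*y = x, show y*x = y
      have h2 : y * x = y := by
        conv_lhs => rw [← h]
        rw [← mul_assoc]; exact hyx
      rw [h, h2]
    · -- x*y = y, show y*x = x
      have h2 : y * x = x := by
        conv_lhs => rw [← h]
        exact hxy
      rw [h, h2]; exact Set.pair_comm y x
    · -- y*x = x, show x*y = y
      have h2 : x * y = y := by
        conv_lhs => rw [← h]
        exact hyx
      rw [h, h2]; exact Set.pair_comm y x
    · -- y*x = y, show x*y = x
      have h2 : x * y = x := by
        conv_lhs => rw [← h]
        rw [← mul_assoc]; exact hxy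
      rw [h, h2]
end
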